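/- For complex numbers s, p, the pair (s,p) lies in the symmetrized bidisc G₂ if and only if |p| < 1 and there exists β ∈ ℂ with |β| < 1 such that s = β p + β̄. -/

import Mathlib

/-!
For `s = z₁ + z₂`, `p = z₁ z₂` one has `s̄ - s p̄ = z̄₁ (1 - |z₂|²) + z̄₂ (1 - |z₁|²)`.
With `a = |z₁|`, `b = |z₂|`, `ab < 1`, the sign of
`1 - a²b² - a(1 - b²) - b(1 - a²) = (1 - a)(1 - b)(1 - ab)` and the triangle inequality
(reversed when `a ≥ 1`) show that both `zᵢ` lie in the disc iff `|s̄ - s p̄| < 1 - |p|²`.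
For `|p| < 1` the ℝ-linear map `β ↦ β p + β̄` is inverted by `s ↦ (s̄ - s p̄) / (1 - |p|²)`,
so `s = β p + β̄` with `|β| < 1` is the same condition.
-/

open Complex ComplexConjugate

def G2 : Set (ℂ × ℂ) :=
  {w | ∃ z₁ z₂ : ℂ, ‖z₁‖ < 1 ∧ ‖z₂‖ < 1 ∧ w = (z₁ + z₂, z₁ * z₂)}

lemma one_sub_mul_conj_eq_ofReal (z : ℂ) : 1 - z * conj z = ((1 - ‖z‖ ^ 2 : ℝ) : ℂ) := by
  rw [mul_conj']
  push_cast
  ring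

lemma norm_conj_mul_ofReal (z : ℂ) (r : ℝ) : ‖conj z * (r : ℂ)‖ = ‖z‖ * |r| := by
  rw [norm_mul, norm_conj, norm_real, Real.norm_eq_abs]

lemma conj_add_sub_add_mul_conj_mul (z₁ z₂ : ℂ) :
    conj (z₁ + z₂) - (z₁ + z₂) * conj (z₁ * z₂) =
      conj z₁ * ((1 - ‖z₂‖ ^ 2 : ℝ) : ℂ) + conj z₂ * ((1 - ‖z₁‖ ^ 2 : ℝ) : ℂ) := by
  rw [← one_sub_mul_conj_eq_ofReal, ← one_sub_mul_conj_eq_ofReal, map_add, map_mul]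
  ring

lemma norm_conj_add_sub_add_mul_conj_mul_lt {z₁ z₂ : ℂ} (h₁ : ‖z₁‖ < 1) (h₂ : ‖z₂‖ < 1) :
    ‖conj (z₁ + z₂) - (z₁ + z₂) * conj (z₁ * z₂)‖ < 1 - ‖z₁ * z₂‖ ^ 2 := by
  have hb₁ : 0 ≤ 1 - ‖z₁‖ ^ 2 := by nlinarith [norm_nonneg z₁]
  have hb₂ : 0 ≤ 1 - ‖z₂‖ ^ 2 := by nlinarith [norm_nonneg z₂]
  have hab : ‖z₁‖ * ‖z₂‖ < 1 := by nlinarith [norm_nonneg z₁, norm_nonneg z₂]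
  calc ‖conj (z₁ + z₂) - (z₁ + z₂) * conj (z₁ * z₂)‖
      ≤ ‖z₁‖ * (1 - ‖z₂‖ ^ 2) + ‖z₂‖ * (1 - ‖z₁‖ ^ 2) := by
        rw [conj_add_sub_add_mul_conj_mul]
        refine (norm_add_le _ _).trans_eq ?_
        rw [norm_conj_mul_ofReal, norm_conj_mul_ofReal, abs_of_nonneg hb₁, abs_of_nonneg hb₂]
    _ < 1 - ‖z₁ * z₂‖ ^ 2 := by
        rw [norm_mul]
        nlinarith [mul_pos (mul_pos (sub_pos.2 h₁) (sub_pos.2 h₂)) (sub_pos.2 hab)]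

lemma norm_lt_one_of_norm_conj_add_sub_add_mul_conj_mul_lt {z₁ z₂ : ℂ}
    (hp : ‖z₁ * z₂‖ < 1)
    (h : ‖conj (z₁ + z₂) - (z₁ + z₂) * conj (z₁ * z₂)‖ < 1 - ‖z₁ * z₂‖ ^ 2) :
    ‖z₁‖ < 1 := by
  by_contra! h₁
  rw [norm_mul] at hp
  have h₂ : ‖z₂‖ < 1 := by nlinarith [norm_nonneg z₂]
  have hb₁ : 1 - ‖z₁‖ ^ 2 ≤ 0 := by nlinarith
  have hb₂ : 0 ≤ 1 - ‖z₂‖ ^ 2 := by nlinarith [norm_nonneg z₂]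
  have : 1 - ‖z₁ * z₂‖ ^ 2 ≤ ‖conj (z₁ + z₂) - (z₁ + z₂) * conj (z₁ * z₂)‖ :=
    calc 1 - ‖z₁ * z₂‖ ^ 2
        ≤ ‖z₁‖ * (1 - ‖z₂‖ ^ 2) - ‖z₂‖ * (‖z₁‖ ^ 2 - 1) := by
          rw [norm_mul]
          nlinarith [mul_nonneg (mul_nonneg (sub_nonneg.2 h₁) (sub_nonneg.2 h₂.le))
            (sub_nonneg.2 hp.le)]
      _ ≤ ‖conj (z₁ + z₂) - (z₁ + z₂) * conj (z₁ * z₂)‖ := by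
          rw [conj_add_sub_add_mul_conj_mul]
          refine le_of_eq_of_le ?_ (norm_sub_le_norm_add _ _)
          rw [norm_conj_mul_ofReal, norm_conj_mul_ofReal, abs_of_nonneg hb₂,
            abs_of_nonpos hb₁]
          ring
  linarith

lemma eq_mul_add_conj_iff {s p β : ℂ} (hp : ‖p‖ ≠ 1) :
    s = β * p + conj β ↔ conj s - s * conj p = β * (1 - p * conj p) := by
  have hD : 1 - p * conj p ≠ 0 := by
    rw [one_sub_mul_conj_eq_ofReal, ofReal_ne_zero, sub_ne_zero, ne_comm]
    exact (pow_eq_one_iff_of_nonneg (norm_nonneg p) two_ne_zero).not.2 hp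
  constructor
  · rintro rfl
    simp only [map_add, map_mul, conj_conj]
    ring
  · intro h
    have h' := congrArg conj h
    simp only [map_sub, map_mul, conj_conj, map_one] at h'
    apply mul_right_cancel₀ hD
    linear_combination h' + p * h

lemma exists_norm_lt_one_eq_mul_add_conj_iff {s p : ℂ} (hp : ‖p‖ < 1) :
    (∃ β : ℂ, ‖β‖ < 1 ∧ s = β * p + conj β) ↔
      ‖conj s - s * conj p‖ < 1 - ‖p‖ ^ 2 := by
  have hD : 0 < 1 - ‖p‖ ^ 2 := by nlinarith [norm_nonneg p]
  have hnorm (β : ℂ) : ‖β * (1 - p * conj p)‖ = ‖β‖ * (1 - ‖p‖ ^ 2) := by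
    rw [one_sub_mul_conj_eq_ofReal, norm_mul, norm_real, Real.norm_of_nonneg hD.le]
  constructor
  · rintro ⟨β, hβ, hs⟩
    rw [(eq_mul_add_conj_iff hp.ne).1 hs, hnorm]
    nlinarith
  · intro h
    refine ⟨(conj s - s * conj p) / (1 - p * conj p), ?_, (eq_mul_add_conj_iff hp.ne).2 ?_⟩
    · rw [one_sub_mul_conj_eq_ofReal, norm_div, norm_real, Real.norm_of_nonneg hD.le]
      exact (div_lt_one hD).2 h
    · rw [div_mul_cancel₀]
      rw [one_sub_mul_conj_eq_ofReal, ofReal_ne_zero]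
      exact hD.ne'

open Polynomial in
lemma exists_add_eq_and_mul_eq {K : Type*} [Field K] [IsAlgClosed K] (s p : K) :
    ∃ z₁ z₂ : K, z₁ + z₂ = s ∧ z₁ * z₂ = p := by
  obtain ⟨z, hz⟩ := IsAlgClosed.exists_root (C 1 * X ^ 2 + C (-s) * X + C p)
    (by rw [degree_quadratic one_ne_zero]; exact two_ne_zero)
  refine ⟨z, s - z, add_sub_cancel z s, ?_⟩
  simp only [IsRoot, eval_add, eval_mul, eval_pow, eval_X, eval_C] at hz
  linear_combination -hz

theorem stmt_3 (s p : ℂ) :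
    (s, p) ∈ G2 ↔
      ‖p‖ < 1 ∧ ∃ β : ℂ, ‖β‖ < 1 ∧ s = β * p + conj β := by
  constructor
  · rintro ⟨z₁, z₂, h₁, h₂, hsp⟩
    obtain ⟨rfl, rfl⟩ := Prod.mk.inj hsp
    have hp : ‖z₁ * z₂‖ < 1 := by
      rw [norm_mul]
      exact mul_lt_one_of_nonneg_of_lt_one_left (norm_nonneg _) h₁ h₂.le
    exact ⟨hp, (exists_norm_lt_one_eq_mul_add_conj_iff hp).2
      (norm_conj_add_sub_add_mul_conj_mul_lt h₁ h₂)⟩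
  · rintro ⟨hp, hβ⟩
    obtain ⟨z₁, z₂, rfl, rfl⟩ := exists_add_eq_and_mul_eq s p
    have h := (exists_norm_lt_one_eq_mul_add_conj_iff hp).1 hβ
    refine ⟨z₁, z₂, norm_lt_one_of_norm_conj_add_sub_add_mul_conj_mul_lt hp h, ?_, rfl⟩
    rw [mul_comm z₁ z₂] at hp h
    rw [add_comm] at h
    exact norm_lt_one_of_norm_conj_add_sub_add_mul_conj_mul_lt hp h
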